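/- arXiv:2210.09408 — 2 statements merged into one kernel-verified Lean document; each statement's English description precedes it below -/
import Mathlib

section
/- For n > 1, the wreath product S_n ≀ H (two or more switches behaving like the symmetric group S_n, with faithful H-action) does not have a surjective strategy whenever |H| is not a power of 2. -/
/-- One step of multiplication in the wreath product `G ≀ H` (base `Ω → G`,
with `H` acting on `Ω`): `(k,h)·(k',h') = (k·(h·k'), hh')`. -/
def wmul {G H Ω : Type*} [Group G] [Group H] [MulAction H Ω]
    (a b : (Ω → G) × H) : (Ω → G) × H :=
  (a.1 * fun ω => b.1 (a.2⁻¹ • ω), a.2 * b.2)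

/-- `ks` is a surjective strategy for `G ≀ H`: for every adversarial sequence
`hs` of the same length, the projections to the base `K = Ω → G` of the partial
products `id, (k₁,h₁), (k₁,h₁)(k₂,h₂), …` cover all of `K`. -/
def IsSurjStrat (G : Type*) [Group G] (H : Type*) [Group H] (Ω : Type*) [MulAction H Ω]
    (ks : List (Ω → G)) : Prop :=
  ∀ hs : List H, hs.length = ks.length →
    ∀ k : Ω → G, k ∈ (((ks.zip hs).scanl wmul 1).map Prod.fst)

/-- The puzzle `G ≀ H` (switches `G` at positions `Ω`, spun by `H`) has a
surjective strategy. -/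
def HasSurjStrat (G : Type*) [Group G] (H : Type*) [Group H] (Ω : Type*) [MulAction H Ω] : Prop :=
  ∃ ks : List (Ω → G), IsSurjStrat G H Ω ks

/-!
Composing with the sign map reduces the problem to the base group `ℤˣ`. Take `h₀ ∈ H` of odd prime
order `p` and a point `ω₀` that it moves, and read a base element along the orbit
`h₀ ^ j • ω₀` (`j : ZMod p`) as a pattern in `ZMod p → ℤˣ`. If the adversary only plays powers of
`h₀`, each move's pattern is multiplied into the position's pattern after a cyclic shift which the
adversary chooses freely one step in advance. The discrete derivative `diff` of a pattern has
product `1`, and since `p` is odd such a pattern, unless trivial, changes under the shift by `1`.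
So at every step one of the shifts `0`, `1` keeps the derivative of the position away from a fixed
target `diff` of some base element, which is therefore never reached.
-/

theorem List.map_scanl_of_semiconj {α α' β β' : Type*} {f : β → α → β} {f' : β' → α' → β'}
    (g : β → β') (e : α → α') (h : ∀ b a, g (f b a) = f' (g b) (e a)) (b : β) (l : List α) :
    (l.scanl f b).map g = (l.map e).scanl f' (g b) := by
  induction l generalizing b with
  | nil => rfl
  | cons a l ih => simp only [List.scanl_cons, List.map_cons, h, ih]

theorem map_wmul {G G' H Ω : Type*} [Group G] [Group G'] [Group H] [MulAction H Ω]
    (φ : G →* G') (a b : (Ω → G) × H) :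
    Prod.map (φ ∘ ·) id (wmul a b) = wmul (Prod.map (φ ∘ ·) id a) (Prod.map (φ ∘ ·) id b) := by
  ext ω <;> simp [wmul]

theorem HasSurjStrat.of_surjective {G G' H Ω : Type*} [Group G] [Group G'] [Group H]
    [MulAction H Ω] (φ : G →* G') (hφ : Function.Surjective φ) :
    HasSurjStrat G H Ω → HasSurjStrat G' H Ω := by
  rintro ⟨ks, hks⟩
  set π : (Ω → G) × H → (Ω → G') × H := Prod.map (φ ∘ ·) id
  refine ⟨ks.map (φ ∘ ·), fun hs hlen k' => ?_⟩
  obtain ⟨k, rfl⟩ := hφ.comp_left k'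
  obtain ⟨q, hq, rfl⟩ := List.mem_map.mp (hks hs (by simpa using hlen) k)
  have hscan : ((ks.zip hs).scanl wmul 1).map π = ((ks.map (φ ∘ ·)).zip hs).scanl wmul 1 := by
    rw [List.map_scanl_of_semiconj π π (map_wmul φ), List.zip_map_left]
    congr
    ext <;> simp [π]
  rw [← hscan, List.map_map]
  exact List.mem_map_of_mem hq

namespace CyclicPattern

variable {p : ℕ} {α G : Type*}

def shift (t : ZMod p) (u : ZMod p → α) : ZMod p → α := fun j => u (j - t)

@[simp] theorem shift_zero (u : ZMod p → α) : shift 0 u = u := by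
  funext j; simp [shift]

theorem eq_of_shift_one_eq [NeZero p] {v : ZMod p → α} (hv : shift 1 v = v) (j : ZMod p) :
    v j = v 0 := by
  obtain ⟨m, rfl⟩ := ZMod.natCast_zmod_surjective j
  induction m with
  | zero => simp
  | succ m ih =>
    have h := congrFun hv ((m : ZMod p) + 1)
    simp only [shift, add_sub_cancel_right] at h
    rw [Nat.cast_succ, ← h, ih]

section CommGroup

variable [CommGroup G]

def diff (u : ZMod p → G) : ZMod p → G := fun j => u (j + 1) / u j

theorem diff_mul (u v : ZMod p → G) : diff (u * v) = diff u * diff v := by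
  funext j; simp only [diff, Pi.mul_apply, mul_div_mul_comm]

theorem diff_shift (t : ZMod p) (u : ZMod p → G) : diff (shift t u) = shift t (diff u) := by
  funext j; simp [diff, shift, sub_add_eq_add_sub]

variable [NeZero p]

theorem prod_diff (u : ZMod p → G) : ∏ j, diff u j = 1 := by
  have hrot : ∏ j, u (j + 1) = ∏ j, u j :=
    Fintype.prod_equiv (Equiv.addRight 1) _ _ fun _ => rfl
  simp only [diff, Finset.prod_div_distrib, hrot, div_self']

theorem shift_one_ne_self (htor : ∀ g : G, g ^ p = 1 → g = 1) {v : ZMod p → G} (hv : v ≠ 1)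
    (hprod : ∏ j, v j = 1) : shift 1 v ≠ v := by
  intro hfix
  have hconst := eq_of_shift_one_eq hfix
  have hv0 : v 0 = 1 := htor _ <| by
    rw [← hprod, Finset.prod_congr rfl fun j _ => hconst j, Finset.prod_const, Finset.card_univ,
      ZMod.card]
  exact hv (funext fun j => (hconst j).trans hv0)

theorem exists_diff_mul_shift_ne (htor : ∀ g : G, g ^ p = 1 → g = 1) {w s : ZMod p → G}
    (hs : diff s ≠ w) (u : ZMod p → G) : ∃ t : ZMod p, diff (s * shift t u) ≠ w := by
  by_cases hsu : diff (s * u) = w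
  · refine ⟨1, fun h => shift_one_ne_self htor (v := diff u) ?_ (prod_diff u) ?_⟩
    · intro hu
      rw [diff_mul, hu, mul_one] at hsu
      exact hs hsu
    · rw [diff_mul] at h hsu
      rw [diff_shift] at h
      exact mul_left_cancel (h.trans hsu.symm)
  · exact ⟨0, by rwa [shift_zero]⟩

end CommGroup

end CyclicPattern

open CyclicPattern

section OrbitPattern

variable {G H Ω : Type*} [Group H] [MulAction H Ω] {p : ℕ} {h₀ : H} {ω₀ : Ω}

variable (h₀ ω₀) in
def orbitPattern (k : Ω → G) : ZMod p → G := fun j => k (h₀ ^ j.val • ω₀)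

theorem orbitPattern_mul [Mul G] (x y : Ω → G) :
    orbitPattern (p := p) h₀ ω₀ (x * y) = orbitPattern h₀ ω₀ x * orbitPattern h₀ ω₀ y :=
  rfl

variable [NeZero p]

theorem pow_val_add (hh₀ : h₀ ^ p = 1) (a b : ZMod p) :
    h₀ ^ (a + b).val = h₀ ^ a.val * h₀ ^ b.val := by
  rw [ZMod.val_add, ← pow_eq_pow_mod _ hh₀, pow_add]

theorem orbitPattern_translate (hh₀ : h₀ ^ p = 1) (t : ZMod p) (k : Ω → G) :
    orbitPattern h₀ ω₀ (fun ω => k ((h₀ ^ t.val)⁻¹ • ω)) = shift t (orbitPattern h₀ ω₀ k) := by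
  funext j
  simp only [orbitPattern, shift]
  congr 1
  rw [inv_smul_eq_iff, smul_smul, ← pow_val_add hh₀, add_sub_cancel]

variable [CommGroup G]

theorem exists_adversary_avoiding (htor : ∀ g : G, g ^ p = 1 → g = 1) (hh₀ : h₀ ^ p = 1)
    (w : ZMod p → G) (ks : List (Ω → G)) (x : Ω → G) (t : ZMod p)
    (hx : diff (orbitPattern h₀ ω₀ x) ≠ w)
    (hnext : ∀ k ∈ ks.head?, diff (orbitPattern h₀ ω₀ x * shift t (orbitPattern h₀ ω₀ k)) ≠ w) :
    ∃ hs : List H, hs.length = ks.length ∧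
      ∀ q ∈ (ks.zip hs).scanl wmul (x, h₀ ^ t.val), diff (orbitPattern h₀ ω₀ q.1) ≠ w := by
  -- The base reached after the next move does not depend on the adversary's reply; the reply only
  -- fixes the shift `t'` with which the move after that enters, and `t'` is chosen to dodge `w`.
  induction ks generalizing x t with
  | nil => exact ⟨[], rfl, by simpa using hx⟩
  | cons k rest ih =>
    set x' := x * fun ω => k ((h₀ ^ t.val)⁻¹ • ω)
    have hx' : diff (orbitPattern h₀ ω₀ x') ≠ w := by
      rw [orbitPattern_mul, orbitPattern_translate hh₀]
      exact hnext k rfl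
    obtain ⟨t', ht'⟩ : ∃ t' : ZMod p,
        ∀ k' ∈ rest.head?, diff (orbitPattern h₀ ω₀ x' * shift t' (orbitPattern h₀ ω₀ k')) ≠ w := by
      cases rest with
      | nil => exact ⟨0, by simp⟩
      | cons k' _ =>
        obtain ⟨t', ht'⟩ := exists_diff_mul_shift_ne htor hx' (orbitPattern h₀ ω₀ k')
        exact ⟨t', by simpa using ht'⟩
    obtain ⟨hs, hlen, hsafe⟩ := ih x' t' hx' ht'
    refine ⟨(h₀ ^ t.val)⁻¹ * h₀ ^ t'.val :: hs, by simp [hlen], ?_⟩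
    have hstep : wmul (x, h₀ ^ t.val) (k, (h₀ ^ t.val)⁻¹ * h₀ ^ t'.val) = (x', h₀ ^ t'.val) := by
      simp [wmul, x']
    rw [List.zip_cons_cons, List.scanl_cons, hstep]
    rintro q (_ | ⟨_, hq⟩)
    · exact hx
    · exact hsafe q hq

theorem exists_diff_orbitPattern_ne [Nontrivial G] (htor : ∀ g : G, g ^ p = 1 → g = 1)
    (hh₀ : h₀ ^ p = 1) (hmove : h₀ • ω₀ ≠ ω₀) (u : ZMod p → G) :
    ∃ k : Ω → G, diff (orbitPattern (p := p) h₀ ω₀ k) ≠ 1 ∧ diff (orbitPattern h₀ ω₀ k) ≠ u := by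
  classical
  obtain ⟨g, hg⟩ := exists_ne (1 : G)
  set k₀ : Ω → G := Pi.mulSingle ω₀ g
  set k₁ : Ω → G := fun ω => k₀ ((h₀ ^ (1 : ZMod p).val)⁻¹ • ω)
  set v := diff (orbitPattern (p := p) h₀ ω₀ k₀)
  have hv : v ≠ 1 := by
    intro h
    have hmove' : h₀ ^ (1 : ZMod p).val • ω₀ ≠ ω₀ := by
      rwa [ZMod.val_one_eq_one_mod, ← pow_eq_pow_mod _ hh₀, pow_one]
    have h0 := congrFun h 0
    simp [v, k₀, diff, orbitPattern, hmove', hg] at h0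
  have hv₁ : diff (orbitPattern h₀ ω₀ k₁) = shift 1 v := by
    rw [orbitPattern_translate hh₀, diff_shift]
  by_cases hu : v = u
  · refine ⟨k₁, ?_, ?_⟩ <;> rw [hv₁]
    · exact fun h => hv (funext fun j => by simpa [shift] using congrFun h (j + 1))
    · exact hu ▸ shift_one_ne_self htor hv (prod_diff _)
  · exact ⟨k₀, hv, hu⟩

end OrbitPattern

theorem not_hasSurjStrat_of_pow_eq_one {G H Ω : Type*} [CommGroup G] [Nontrivial G] [Group H]
    [MulAction H Ω] {p : ℕ} [NeZero p] (htor : ∀ g : G, g ^ p = 1 → g = 1) {h₀ : H}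
    (hh₀ : h₀ ^ p = 1) {ω₀ : Ω} (hmove : h₀ • ω₀ ≠ ω₀) : ¬ HasSurjStrat G H Ω := by
  rintro ⟨ks, hks⟩
  obtain ⟨kw, hw1, hwk⟩ := exists_diff_orbitPattern_ne htor hh₀ hmove
    (diff (orbitPattern h₀ ω₀ (ks.headD 1)))
  have hstart : ((1 : Ω → G), h₀ ^ (0 : ZMod p).val) = 1 := by simp
  have hdiff_one : diff (orbitPattern (p := p) h₀ ω₀ (1 : Ω → G)) = 1 := by
    funext j; simp [diff, orbitPattern]
  obtain ⟨hs, hlen, hsafe⟩ := exists_adversary_avoiding (ω₀ := ω₀) htor hh₀ _ ks 1 0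
    (by rw [hdiff_one]; exact hw1.symm) fun k hk => by
      rw [diff_mul, hdiff_one, one_mul, shift_zero]
      rw [List.headD_eq_head?_getD, Option.mem_def.mp hk, Option.getD_some] at hwk
      exact hwk.symm
  obtain ⟨q, hq, rfl⟩ := List.mem_map.mp (hks hs hlen kw)
  exact hsafe q (hstart ▸ hq) rfl

theorem stmt10_general {H Ω : Type*} [Group H] [Finite H] [MulAction H Ω]
    [FaithfulSMul H Ω]
    (n : ℕ) (hn : 1 < n)
    (hH : ¬ ∃ m : ℕ, Nat.card H = 2 ^ m) :
    ¬ HasSurjStrat (Equiv.Perm (Fin n)) H Ω := by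
  obtain ⟨p, hp, hdvd, hodd⟩ := (Nat.card H).eq_two_pow_or_exists_odd_prime_and_dvd.resolve_left hH
  have := Fact.mk hp
  obtain ⟨h₀, hord⟩ := exists_prime_orderOf_dvd_card' p hdvd
  obtain ⟨ω₀, hmove⟩ : ∃ ω₀ : Ω, h₀ • ω₀ ≠ ω₀ := by
    by_contra! hfix
    have : h₀ = 1 := eq_of_smul_eq_smul fun ω => by rw [hfix ω, one_smul]
    exact hp.one_lt.ne' (hord ▸ orderOf_eq_one_iff.mpr this)
  have htor : ∀ u : ℤˣ, u ^ p = 1 → u = 1 := fun u hu => by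
    rwa [Int.units_pow_eq_pow_mod_two, Nat.odd_iff.mp hodd, pow_one] at hu
  have : Nontrivial (Fin n) := Fin.nontrivial_iff_two_le.mpr hn
  have : Nontrivial ℤˣ := ⟨⟨-1, 1, by decide⟩⟩
  exact fun h => not_hasSurjStrat_of_pow_eq_one htor (hord ▸ pow_orderOf_eq_one h₀) hmove
    (h.of_surjective _ (Equiv.Perm.sign_surjective (Fin n)))

/-- for n > 1, Sₙ ≀ H (H acting faithfully on Ω) has no surjective
strategy whenever |H| is not a power of 2. -/
theorem stmt10 {H Ω : Type*} [Group H] [Finite H] [MulAction H Ω]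
    [Fintype Ω] [FaithfulSMul H Ω]
    (n : ℕ) (hn : 1 < n)
    (hH : ¬ ∃ m : ℕ, Nat.card H = 2 ^ m) :
    ¬ HasSurjStrat (Equiv.Perm (Fin n)) H Ω :=
  stmt10_general n hn hH
end

section
/- Let G be a finite group, N ⊴ G with coset representatives g_1,…,g_m (m = [G:N]). If a sequence of elements of N has partial products covering all of N, and a sequence of representatives has partial products hitting every coset of N, then the interleaved sequence (with the N-sequence inserted around each representative move) has partial products covering all of G. -/
/-- The interleave A ⊛ B = (A, b₁, A, b₂, …, b_M, A). -/
def interleave {α : Type*} (A B : List α) : List α :=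
  A ++ (B.map fun b => b :: A).flatten

section Aux

variable {G : Type*} [Group G]

private lemma scanl_mul_gen (a b : G) (l : List G) :
    List.scanl (· * ·) (a * b) l = (List.scanl (· * ·) b l).map (a * ·) := by
  induction l generalizing b with
  | nil => simp
  | cons x l ih => simp [List.scanl_cons, List.singleton_append, mul_assoc, ih]

private lemma scanl_mul (a : G) (l : List G) :
    List.scanl (· * ·) a l = (List.scanl (· * ·) 1 l).map (a * ·) := by
  simpa using scanl_mul_gen a 1 l

private lemma foldl_mul (a : G) (l : List G) :
    List.foldl (· * ·) a l = a * l.prod := by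
  induction l generalizing a with
  | nil => simp
  | cons x l ih => simp [ih, mul_assoc]

private lemma self_mem_scanl (a : G) (l : List G) : a ∈ List.scanl (· * ·) a l := by
  cases l <;> simp [List.scanl_cons, List.singleton_append]

private lemma mem_scanl_append_left (a x : G) (l1 l2 : List G)
    (h : x ∈ List.scanl (· * ·) a l1) : x ∈ List.scanl (· * ·) a (l1 ++ l2) := by
  induction l1 generalizing a with
  | nil =>
    simp at h
    subst h
    exact self_mem_scanl _ l2
  | cons y l ih =>
    simp only [List.scanl_cons, List.singleton_append, List.mem_cons, List.cons_append] at h ⊢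
    rcases h with h | h
    · exact Or.inl h
    · exact Or.inr (ih _ h)

private lemma mem_scanl_append_right (a x : G) (l1 l2 : List G)
    (h : x ∈ List.scanl (· * ·) (List.foldl (· * ·) a l1) l2) :
    x ∈ List.scanl (· * ·) a (l1 ++ l2) := by
  induction l1 generalizing a with
  | nil => simpa using h
  | cons y l ih =>
    simp only [List.cons_append, List.scanl_cons, List.singleton_append, List.mem_cons]
    exact Or.inr (ih _ (by simpa using h))

private lemma core (N : Subgroup G) [N.Normal] (Sn : List G) (hSn : ∀ x ∈ Sn, x ∈ N)
    (hSncover : ∀ x : G, x ∈ N → x ∈ Sn.scanl (· * ·) 1) :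
    ∀ (S : List G) (a g : G),
      (∃ m ∈ S.scanl (· * ·) 1, (QuotientGroup.mk (a * m) : G ⧸ N) = QuotientGroup.mk g) →
      g ∈ (interleave Sn S).scanl (· * ·) a := by
  intro S
  have hfirst : ∀ (a g : G) (L : List G),
      (QuotientGroup.mk a : G ⧸ N) = QuotientGroup.mk g →
      g ∈ List.scanl (· * ·) a (Sn ++ L) := by
    intro a g L hq
    apply mem_scanl_append_left
    have hmem : a⁻¹ * g ∈ N := QuotientGroup.eq.mp hq
    rw [scanl_mul]
    exact List.mem_map.mpr ⟨a⁻¹ * g, hSncover _ hmem, by group⟩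
  induction S with
  | nil =>
    rintro a g ⟨m, hm, hq⟩
    simp only [List.scanl_nil, List.mem_singleton] at hm
    subst hm
    rw [mul_one] at hq
    simpa [interleave] using hfirst a g [] hq
  | cons s S ih =>
    rintro a g ⟨m, hm, hq⟩
    have hint : interleave Sn (s :: S) = Sn ++ s :: interleave Sn S := by
      simp [interleave]
    rw [hint]
    simp only [List.scanl_cons, List.singleton_append, List.mem_cons, one_mul] at hm
    rcases hm with rfl | hm
    · rw [mul_one] at hq
      exact hfirst a g _ hq
    · -- m ∈ scanl (· * ·) s S, so m = s * m' with m' ∈ scanl 1 S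
      rw [scanl_mul, List.mem_map] at hm
      obtain ⟨m', hm', rfl⟩ := hm
      apply mem_scanl_append_right
      rw [List.scanl_cons]
      refine List.mem_cons.mpr (Or.inr ?_)
      apply ih
      refine ⟨m', hm', ?_⟩
      rw [foldl_mul]
      have hP : (QuotientGroup.mk Sn.prod : G ⧸ N) = 1 :=
        (QuotientGroup.eq_one_iff _).mpr (list_prod_mem (by exact fun x hx => hSn x hx))
      calc (QuotientGroup.mk (a * Sn.prod * s * m') : G ⧸ N)
          = QuotientGroup.mk a * QuotientGroup.mk Sn.prod * QuotientGroup.mk s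
              * QuotientGroup.mk m' := by
            simp [QuotientGroup.mk_mul]
        _ = QuotientGroup.mk a * QuotientGroup.mk s * QuotientGroup.mk m' := by
            rw [hP, mul_one]
        _ = QuotientGroup.mk (a * (s * m')) := by simp [QuotientGroup.mk_mul, mul_assoc]
        _ = QuotientGroup.mk g := hq

end Aux

/-- if the partial products of a sequence of elements of a normal
subgroup N cover N, and the partial products of a sequence of coset
representatives hit every coset of N, then the partial products of the
interleaved sequence cover all of G. -/
theorem stmt19 {G : Type*} [Group G] [Finite G] (N : Subgroup G) [N.Normal]
    (r : G ⧸ N → G) (hr : ∀ q : G ⧸ N, QuotientGroup.mk (r q) = q)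
    (Sn : List G) (hSn : ∀ x ∈ Sn, x ∈ N)
    (hSncover : ∀ x : G, x ∈ N → x ∈ Sn.scanl (· * ·) 1)
    (S : List G) (hS : ∀ s ∈ S, s ∈ Set.range r)
    (hScover : ∀ g : G, ∃ m ∈ S.scanl (· * ·) 1,
      (QuotientGroup.mk m : G ⧸ N) = QuotientGroup.mk g) :
    ∀ g : G, g ∈ (interleave Sn S).scanl (· * ·) 1 := by
  intro g
  obtain ⟨m, hm, hq⟩ := hScover g
  exact core N Sn hSn hSncover S 1 g ⟨m, hm, by simpa using hq⟩
end
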